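/- arXiv:0710.2233 — 7 statements merged into one kernel-verified Lean document; each statement's English description precedes it below -/
import Mathlib

section
/- Let m > 1 be an integer and let μ, ν be roots of unity in ℂ with μ ≠ 1. If (1 + ν^m)(1 - μ)^m = (1 - μ^m)(1 - ν)^m, then μ^m = 1 and ν^m = -1. -/
/-!
On the unit circle `conj w = w⁻¹`, so conjugation sends `1 + w` to `w⁻¹ (1 + w)` and `1 - w` to
`-w⁻¹ (1 - w)`. Conjugating the equation and clearing the common factor `(-1)^m (μ ν)^(-m)` turns
it into the same equation with the right-hand side negated, so both sides vanish; as `μ ≠ 1` this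
forces `ν ^ m = -1`, hence `ν ≠ 1` and then `μ ^ m = 1`.
-/

/-- A root of unity: a complex number `z` with `z ^ n = 1` for some positive integer `n`. -/
def IsRootOfUnity (z : ℂ) : Prop := ∃ n : ℕ, 0 < n ∧ z ^ n = 1

open ComplexConjugate

namespace RCLike

variable {𝕜 : Type*} [RCLike 𝕜]

lemma conj_one_add_of_norm_eq_one {z : 𝕜} (hz : ‖z‖ = 1) : conj (1 + z) = z⁻¹ * (1 + z) := by
  have hz0 : z ≠ 0 := by rintro rfl; simp at hz
  rw [map_add, map_one, ← inv_eq_conj hz, mul_add, mul_one, inv_mul_cancel₀ hz0, add_comm]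

lemma conj_one_sub_of_norm_eq_one {z : 𝕜} (hz : ‖z‖ = 1) : conj (1 - z) = -(z⁻¹ * (1 - z)) := by
  have hz0 : z ≠ 0 := by rintro rfl; simp at hz
  rw [map_sub, map_one, ← inv_eq_conj hz, mul_sub, mul_one, inv_mul_cancel₀ hz0, neg_sub]

lemma eq_neg_of_one_add_pow_mul_one_sub_pow_eq {μ ν : 𝕜} (hμ : ‖μ‖ = 1) (hν : ‖ν‖ = 1) (m : ℕ)
    (heq : (1 + ν ^ m) * (1 - μ) ^ m = (1 - μ ^ m) * (1 - ν) ^ m) :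
    (1 + ν ^ m) * (1 - μ) ^ m = -((1 - μ ^ m) * (1 - ν) ^ m) := by
  have hμm : ‖μ ^ m‖ = 1 := by rw [norm_pow, hμ, one_pow]
  have hνm : ‖ν ^ m‖ = 1 := by rw [norm_pow, hν, one_pow]
  have hconj := congrArg conj heq
  rw [map_mul, map_mul, map_pow, map_pow, conj_one_add_of_norm_eq_one hνm,
    conj_one_sub_of_norm_eq_one hμ, conj_one_sub_of_norm_eq_one hμm,
    conj_one_sub_of_norm_eq_one hν] at hconj
  have hunit : (-1) ^ m * (μ⁻¹ ^ m * ν⁻¹ ^ m) ≠ (0 : 𝕜) := by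
    have hμ0 : μ ≠ 0 := by rintro rfl; simp at hμ
    have hν0 : ν ≠ 0 := by rintro rfl; simp at hν
    simp [hμ0, hν0]
  apply mul_left_cancel₀ hunit
  rw [neg_pow (μ⁻¹ * (1 - μ)), neg_pow (ν⁻¹ * (1 - ν)), mul_pow, mul_pow] at hconj
  linear_combination hconj

end RCLike

lemma IsRootOfUnity.norm_eq_one {z : ℂ} (hz : IsRootOfUnity z) : ‖z‖ = 1 := by
  obtain ⟨n, hn, hzn⟩ := hz
  exact Complex.norm_eq_one_of_pow_eq_one hzn hn.ne'

theorem beukers_diophantine_three_general (m : ℕ) (μ ν : ℂ)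
    (hμ : IsRootOfUnity μ) (hν : IsRootOfUnity ν) (hμ1 : μ ≠ 1)
    (heq : (1 + ν ^ m) * (1 - μ) ^ m = (1 - μ ^ m) * (1 - ν) ^ m) :
    μ ^ m = 1 ∧ ν ^ m = -1 := by
  have hneg := RCLike.eq_neg_of_one_add_pow_mul_one_sub_pow_eq hμ.norm_eq_one hν.norm_eq_one m heq
  have hlhs : (1 + ν ^ m) * (1 - μ) ^ m = 0 := by linear_combination (heq + hneg) / 2
  have hrhs : (1 - μ ^ m) * (1 - ν) ^ m = 0 := heq ▸ hlhs
  have hνm : ν ^ m = -1 := by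
    have hν_add := (mul_eq_zero.mp hlhs).resolve_right (pow_ne_zero _ (sub_ne_zero.mpr hμ1.symm))
    linear_combination hν_add
  have hν1 : 1 - ν ≠ 0 := by
    rintro h
    rw [← sub_eq_zero.mp h, one_pow] at hνm
    norm_num at hνm
  have hμ_sub := (mul_eq_zero.mp hrhs).resolve_right (pow_ne_zero _ hν1)
  exact ⟨by linear_combination -hμ_sub, hνm⟩

theorem beukers_diophantine_three (m : ℕ) (hm : 1 < m) (μ ν : ℂ)
    (hμ : IsRootOfUnity μ) (hν : IsRootOfUnity ν) (hμ1 : μ ≠ 1)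
    (heq : (1 + ν ^ m) * (1 - μ) ^ m = (1 - μ ^ m) * (1 - ν) ^ m) :
    μ ^ m = 1 ∧ ν ^ m = -1 :=
  beukers_diophantine_three_general m μ ν hμ hν hμ1 heq
end

section
/- Let m be a positive integer and let ν be a root of unity in ℂ such that (1 + ν^m)·2^(m-1) = (1 - ν)^m. Then ν = -1 and m is even. -/
/-!
Let `n` be the order of `ν`. If `n ≤ 2` then `ν = ±1`, and `ν = 1` does not satisfy the equation.
If `n > 2`, the equation is a relation over `ℚ`, so it holds for a primitive `n`-th root of unity
`ζ` of the cyclotomic field `K = ℚ(ζ_n)`, where it says that `2 ^ (m - 1)` divides `(ζ - 1) ^ m`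
in `𝓞 K`. Taking norms, `2 ^ ((m - 1) φ(n))` divides `Φₙ(1) ^ m`, and `Φₙ(1)` is `1` or a prime;
since `φ(n) ≥ 2`, this forces `m ≤ 2`, and for `m ≤ 2` the equation is solved by hand.
-/

open Polynomial NumberField

theorem IsPrimitiveRoot.aeval_eq_zero_of_aeval_eq_zero {K L : Type*} [Field K] [CharZero K]
    [Field L] [CharZero L] {n : ℕ} (hn : 0 < n) {μ : K} {ζ : L} (hμ : IsPrimitiveRoot μ n)
    (hζ : IsPrimitiveRoot ζ n) {P : ℚ[X]} (hP : aeval μ P = 0) : aeval ζ P = 0 := by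
  refine aeval_eq_zero_of_dvd_aeval_eq_zero ?_ (minpoly.aeval ℚ ζ)
  rw [← cyclotomic_eq_minpoly_rat hζ hn, cyclotomic_eq_minpoly_rat hμ hn]
  exact minpoly.dvd ℚ μ hP

theorem exists_eval_one_cyclotomic_eq_one_or_prime {n : ℕ} (hn : n ≠ 1) :
    ∃ a : ℕ, (a = 1 ∨ a.Prime) ∧ eval 1 (cyclotomic n ℤ) = a := by
  by_cases hpow : IsPrimePow n
  · obtain ⟨p, k, hp, hk, rfl⟩ := (isPrimePow_nat_iff n).1 hpow
    have : Fact p.Prime := ⟨hp⟩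
    obtain ⟨k, rfl⟩ := Nat.exists_eq_add_one.2 hk
    exact ⟨p, Or.inr hp, eval_one_cyclotomic_prime_pow k⟩
  · refine ⟨1, Or.inl rfl, eval_one_cyclotomic_not_prime_pow fun hp k hpk => hpow ?_⟩
    rcases k with _ | k
    · exact absurd (by simpa using hpk.symm) hn
    · exact (isPrimePow_nat_iff n).2 ⟨_, k + 1, hp, k.succ_pos, hpk⟩

theorem Nat.le_of_two_pow_dvd_pow {a k m : ℕ} (ha : a = 1 ∨ a.Prime) (h : 2 ^ k ∣ a ^ m) :
    k ≤ m := by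
  rcases ha with rfl | hp
  · simp at h
    omega
  have ham : a ^ m ≠ 0 := pow_ne_zero m hp.ne_zero
  calc k ≤ (a ^ m).factorization 2 := (Nat.prime_two.pow_dvd_iff_le_factorization ham).1 h
    _ = m * Finsupp.single a 1 2 := by rw [Nat.factorization_pow, hp.factorization]; rfl
    _ ≤ m := by
      rw [Finsupp.single_apply]
      split_ifs <;> simp

theorem NumberField.RingOfIntegers.pow_finrank_dvd_norm_of_intCast_dvd {K : Type*} [Field K]
    [NumberField K] {c : ℤ} {x : 𝓞 K} (h : (c : 𝓞 K) ∣ x) :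
    c ^ Module.finrank ℚ K ∣ Algebra.norm ℤ x := by
  simpa [← RingOfIntegers.rank, ← Algebra.norm_algebraMap] using map_dvd (Algebra.norm ℤ) h

theorem IsPrimitiveRoot.norm_toInteger_sub_one_eq_eval_one_cyclotomic {K : Type*} [Field K]
    [CharZero K] {n : ℕ} [NeZero n] [IsCyclotomicExtension {n} ℚ K] {ζ : K}
    (hζ : IsPrimitiveRoot ζ n) (hn : 2 < n) :
    Algebra.norm ℤ (hζ.toInteger - 1) = eval 1 (cyclotomic n ℤ) := by
  have : NumberField K := IsCyclotomicExtension.numberField {n} ℚ K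
  rw [Algebra.norm_eq_iff ℤ (Sₘ := K) (Rₘ := ℚ) le_rfl, map_sub, map_one, eq_intCast]
  exact hζ.sub_one_norm_eq_eval_cyclotomic hn (cyclotomic.irreducible_rat (NeZero.pos _))

theorem IsPrimitiveRoot.two_pow_dvd_eval_one_cyclotomic_pow {K : Type*} [Field K] [CharZero K]
    {n : ℕ} [NeZero n] [IsCyclotomicExtension {n} ℚ K] {ζ : K} (hζ : IsPrimitiveRoot ζ n)
    (hn : 2 < n) {m : ℕ} (heq : (1 + ζ ^ m) * 2 ^ (m - 1) = (1 - ζ) ^ m) :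
    (2 : ℤ) ^ ((m - 1) * n.totient) ∣ eval 1 (cyclotomic n ℤ) ^ m := by
  have : NumberField K := IsCyclotomicExtension.numberField {n} ℚ K
  have hdvd : ((2 ^ (m - 1) : ℤ) : 𝓞 K) ∣ (hζ.toInteger - 1) ^ m := by
    refine ⟨(-1) ^ m * (1 + hζ.toInteger ^ m), RingOfIntegers.ext ?_⟩
    have hz : algebraMap (𝓞 K) K hζ.toInteger = ζ := rfl
    simp only [map_pow, map_sub, map_mul, map_add, map_one, map_neg, map_intCast, hz]
    rw [← neg_sub, neg_pow]
    push_cast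
    linear_combination -(-1) ^ m * heq
  have hnorm := RingOfIntegers.pow_finrank_dvd_norm_of_intCast_dvd hdvd
  rwa [map_pow, hζ.norm_toInteger_sub_one_eq_eval_one_cyclotomic hn,
    IsCyclotomicExtension.Rat.finrank n K, ← pow_mul] at hnorm

theorem le_two_of_isPrimitiveRoot {L : Type*} [Field L] [CharZero L] {n m : ℕ} {ν : L}
    (hν : IsPrimitiveRoot ν n) (hn : 2 < n) (heq : (1 + ν ^ m) * 2 ^ (m - 1) = (1 - ν) ^ m) :
    m ≤ 2 := by
  have : NeZero n := ⟨by omega⟩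
  have : IsCyclotomicExtension {n} ℚ (CyclotomicField n ℚ) :=
    CyclotomicField.isCyclotomicExtension n ℚ
  have hζ := IsCyclotomicExtension.zeta_spec n ℚ (CyclotomicField n ℚ)
  let P : ℚ[X] := (1 + X ^ m) * C 2 ^ (m - 1) - (1 - X) ^ m
  have heqζ := hν.aeval_eq_zero_of_aeval_eq_zero (NeZero.pos n) hζ (P := P) (by simp [P, heq])
  simp only [P, map_sub, map_mul, map_add, map_pow, map_one, aeval_X, map_ofNat,
    sub_eq_zero] at heqζ
  have hdvd := hζ.two_pow_dvd_eval_one_cyclotomic_pow hn heqζ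
  have hle : (m - 1) * n.totient ≤ m := by
    obtain ⟨a, ha, h⟩ := exists_eval_one_cyclotomic_eq_one_or_prime (by omega : n ≠ 1)
    rw [h] at hdvd
    exact Nat.le_of_two_pow_dvd_pow ha (by exact_mod_cast hdvd)
  have htot : 2 ≤ n.totient := by
    obtain ⟨r, hr⟩ := Nat.totient_even hn
    have := Nat.totient_pos.2 (NeZero.pos n)
    omega
  have := Nat.mul_le_mul_left (m - 1) htot
  omega

theorem eq_neg_one_of_le_two {L : Type*} [Field L] [CharZero L] {m : ℕ} {ν : L} (hν : ν ≠ 0)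
    (hm : 0 < m) (hm2 : m ≤ 2) (heq : (1 + ν ^ m) * 2 ^ (m - 1) = (1 - ν) ^ m) : ν = -1 := by
  interval_cases m
  · exact absurd (by linear_combination heq / 2) hν
  · have : (ν + 1) ^ 2 = 0 := by linear_combination heq
    linear_combination pow_eq_zero_iff two_ne_zero |>.1 this

theorem beukers_proposition (m : ℕ) (hm : 0 < m) (ν : ℂ)
    (hν : IsRootOfUnity ν)
    (heq : (1 + ν ^ m) * 2 ^ (m - 1) = (1 - ν) ^ m) :
    ν = -1 ∧ Even m := by
  obtain ⟨n, hn, hνn⟩ := hν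
  have hν0 : ν ≠ 0 := by
    rintro rfl
    simp [zero_pow hn.ne'] at hνn
  have hord : 0 < orderOf ν := (isOfFinOrder_iff_pow_eq_one.2 ⟨n, hn, hνn⟩).orderOf_pos
  have hν' : ν = -1 := by
    rcases le_or_gt (orderOf ν) 2 with hd | hd
    · have hsq : ν ^ 2 = 1 :=
        orderOf_dvd_iff_pow_eq_one.1 (by interval_cases (orderOf ν) <;> norm_num)
      rcases sq_eq_one_iff.1 hsq with rfl | h
      · simp [zero_pow hm.ne'] at heq
      · exact h
    · exact eq_neg_one_of_le_two hν0 hm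
        (le_two_of_isPrimitiveRoot (IsPrimitiveRoot.orderOf ν) hd heq) heq
  refine ⟨hν', Nat.not_odd_iff_even.1 fun hodd => ?_⟩
  rw [hν', hodd.neg_one_pow] at heq
  norm_num at heq
  exact pow_ne_zero m two_ne_zero heq.symm
end

section
/- Let m ≥ 1 be an integer. In ℂ[y]: the polynomial 1 + y + y² divides 1 + y^m - (1 + y)^m if and only if m ≡ 1 or 5 (mod 6), and the polynomial (1 + y + y²)² divides 1 + y^m - (1 + y)^m if and only if m ≡ 1 (mod 6). -/
open Polynomial

/-!
Let `η` be a primitive sixth root of unity, so that `ζ = η²` is a primitive cube root of unity and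
`1 + ζ = η`. Then `1 + ζ^m - (1 + ζ)^m = 1 - η^m + η^(2m) = Φ₆(η^m)`, which vanishes exactly when
`η^m` is again a primitive sixth root, i.e. when `m` is prime to 6. The derivative at `ζ` is
`m η^(m-1) (η^(m-1) - 1)`, which for such `m` vanishes exactly when `6 ∣ m - 1`. The roots of
`1 + X + X²` are the distinct points `η²` and `(η⁵)²`, so divisibility by `1 + X + X²` (resp. its
square) amounts to the conditions above for both `η` and `η⁵`.
-/

theorem Nat.coprime_six_iff (m : ℕ) : m.Coprime 6 ↔ m % 6 = 1 ∨ m % 6 = 5 := by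
  rw [Nat.Coprime, Nat.gcd_comm, Nat.gcd_rec]
  have := Nat.mod_lt m (by norm_num : 6 > 0)
  interval_cases m % 6 <;> decide

theorem IsCoprime.mul_dvd_iff {R : Type*} [CommSemiring R] {a b c : R} (h : IsCoprime a b) :
    a * b ∣ c ↔ a ∣ c ∧ b ∣ c :=
  ⟨fun hab ↦ ⟨dvd_of_mul_right_dvd hab, dvd_of_mul_left_dvd hab⟩, fun ⟨ha, hb⟩ ↦ h.mul_dvd ha hb⟩

namespace Polynomial

theorem sq_X_sub_C_dvd_iff {R : Type*} [CommRing R] {p : R[X]} {a : R} :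
    (X - C a) ^ 2 ∣ p ↔ p.IsRoot a ∧ (derivative p).IsRoot a := by
  constructor
  · rintro ⟨q, rfl⟩
    simp [derivative_mul, derivative_pow]
  · rintro ⟨hp, hp'⟩
    obtain ⟨q, rfl⟩ := dvd_iff_isRoot.mpr hp
    have hq : q.IsRoot a := by simpa [derivative_mul] using hp'
    obtain ⟨r, rfl⟩ := dvd_iff_isRoot.mpr hq
    exact ⟨r, by ring⟩

end Polynomial

namespace IsPrimitiveRoot

section IsDomain

variable {R : Type*} [CommRing R] [IsDomain R] {η : R}

theorem one_add_sq_of_six (hη : IsPrimitiveRoot η 6) : 1 + η ^ 2 = η := by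
  have h := hη.isRoot_cyclotomic (by norm_num)
  rw [cyclotomic_six, IsRoot, eval_add, eval_sub, eval_pow, eval_X, eval_one] at h
  linear_combination h

theorem X_sub_C_dvd_one_add_X_pow_sub_iff (hη : IsPrimitiveRoot η 6) (m : ℕ) :
    X - C (η ^ 2) ∣ (1 + X ^ m - (1 + X) ^ m : R[X]) ↔ m.Coprime 6 := by
  have heval : (1 + X ^ m - (1 + X) ^ m : R[X]).eval (η ^ 2) = (cyclotomic 6 R).eval (η ^ m) := by
    simp only [cyclotomic_six, eval_add, eval_sub, eval_pow, eval_X, eval_one, hη.one_add_sq_of_six]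
    ring
  have := hη.neZero'
  rw [dvd_iff_isRoot, IsRoot, heval, ← IsRoot, isRoot_cyclotomic_iff, hη.pow_iff_coprime (by norm_num)]

theorem sq_X_sub_C_dvd_one_add_X_pow_sub_iff [CharZero R] (hη : IsPrimitiveRoot η 6) (m : ℕ) :
    (X - C (η ^ 2)) ^ 2 ∣ (1 + X ^ m - (1 + X) ^ m : R[X]) ↔ m % 6 = 1 := by
  have hderiv : (derivative (1 + X ^ m - (1 + X) ^ m : R[X])).eval (η ^ 2) =
      m * η ^ (m - 1) * (η ^ (m - 1) - 1) := by
    simp only [derivative_sub, derivative_add, derivative_one, derivative_pow, map_natCast,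
      derivative_X, mul_one, zero_add, eval_sub, eval_mul, eval_natCast, eval_pow, eval_X, eval_add,
      eval_one, hη.one_add_sq_of_six]
    ring
  rw [sq_X_sub_C_dvd_iff, ← dvd_iff_isRoot, hη.X_sub_C_dvd_one_add_X_pow_sub_iff,
    Nat.coprime_six_iff, IsRoot, hderiv]
  constructor
  · rintro ⟨hm, hroot⟩
    have hm0 : (m : R) ≠ 0 := Nat.cast_ne_zero.mpr (by omega)
    have hpow0 : η ^ (m - 1) ≠ 0 := pow_ne_zero _ (hη.ne_zero (by norm_num))
    have h6 : 6 ∣ m - 1 := (hη.pow_eq_one_iff_dvd _).mp <|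
      sub_eq_zero.mp ((mul_eq_zero.mp hroot).resolve_left (mul_ne_zero hm0 hpow0))
    omega
  · intro hm
    refine ⟨Or.inl hm, ?_⟩
    rw [(hη.pow_eq_one_iff_dvd _).mpr (by omega), sub_self, mul_zero]

end IsDomain

variable {K : Type*} [Field K] {η : K}

theorem one_add_X_add_X_sq_eq_mul (hη : IsPrimitiveRoot η 6) :
    (1 + X + X ^ 2 : K[X]) = (X - C (η ^ 2)) * (X - C ((η ^ 5) ^ 2)) := by
  have h1 := hη.one_add_sq_of_six
  have h6 := hη.pow_eq_one
  have hsum : η ^ 2 + (η ^ 5) ^ 2 = -1 := by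
    linear_combination η ^ 4 * h6 + (η ^ 2 + η + 1) * h1
  have hprod : η ^ 2 * (η ^ 5) ^ 2 = 1 := by linear_combination (η ^ 6 + 1) * h6
  calc (1 + X + X ^ 2 : K[X])
      = X ^ 2 - C (η ^ 2 + (η ^ 5) ^ 2) * X + C (η ^ 2 * (η ^ 5) ^ 2) := by
        rw [hsum, hprod]; simp only [map_neg, map_one]; ring
    _ = (X - C (η ^ 2)) * (X - C ((η ^ 5) ^ 2)) := by simp only [map_add, map_mul]; ring

theorem isCoprime_X_sub_C_sq_X_sub_C_pow_five_sq (hη : IsPrimitiveRoot η 6) :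
    IsCoprime (X - C (η ^ 2)) (X - C ((η ^ 5) ^ 2)) := by
  refine isCoprime_X_sub_C_of_isUnit_sub (sub_ne_zero.mpr fun h ↦ ?_).isUnit
  have h4 : η ^ 2 = η ^ 4 := by linear_combination h + η ^ 4 * hη.pow_eq_one
  exact absurd (hη.pow_inj (by norm_num) (by norm_num) h4) (by norm_num)

end IsPrimitiveRoot

theorem cyclotomic_divisor_of_scalar_G_general (m : ℕ) :
    ((1 + X + X ^ 2 : Polynomial ℂ) ∣ (1 + X ^ m - (1 + X) ^ m) ↔
      m % 6 = 1 ∨ m % 6 = 5) ∧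
    (((1 + X + X ^ 2 : Polynomial ℂ)) ^ 2 ∣ (1 + X ^ m - (1 + X) ^ m) ↔
      m % 6 = 1) := by
  have hη := Complex.isPrimitiveRoot_exp 6 (by norm_num)
  have hη5 := hη.pow_of_coprime 5 (by norm_num)
  have hcop := hη.isCoprime_X_sub_C_sq_X_sub_C_pow_five_sq
  rw [hη.one_add_X_add_X_sq_eq_mul, mul_pow, hcop.mul_dvd_iff, hcop.pow.mul_dvd_iff,
    hη.X_sub_C_dvd_one_add_X_pow_sub_iff, hη5.X_sub_C_dvd_one_add_X_pow_sub_iff,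
    hη.sq_X_sub_C_dvd_one_add_X_pow_sub_iff, hη5.sq_X_sub_C_dvd_one_add_X_pow_sub_iff,
    and_self, and_self, Nat.coprime_six_iff]
  exact ⟨.rfl, .rfl⟩

/-- Divisibility of `1 + y^m - (1+y)^m` by `1 + y + y²` and its square, in terms of
congruences of `m` modulo 6. -/
theorem cyclotomic_divisor_of_scalar_G (m : ℕ) (hm : 1 ≤ m) :
    ((1 + X + X ^ 2 : Polynomial ℂ) ∣ (1 + X ^ m - (1 + X) ^ m) ↔
      m % 6 = 1 ∨ m % 6 = 5) ∧
    (((1 + X + X ^ 2 : Polynomial ℂ)) ^ 2 ∣ (1 + X ^ m - (1 + X) ^ m) ↔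
      m % 6 = 1) :=
  cyclotomic_divisor_of_scalar_G_general m
end

section
/- Let m ≥ 2 be an integer and r ∈ ℂ. Then r is a root of multiplicity at least 2 of the polynomial 1 + y^m - (1 + y)^m ∈ ℂ[y] (equivalently, 1 + r^m - (1+r)^m = 0 and m·r^{m-1} - m·(1+r)^{m-1} = 0) if and only if r^{m-1} = 1 and (1 + r)^{m-1} = 1. -/
/-! If `r ^ n = (1 + r) ^ n = c`, then `1 + r ^ (n + 1) - (1 + r) ^ (n + 1) = 1 + c * (r - (1 + r)) = 1 - c`,
so the two conditions for a double root force `c = 1`. -/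

theorem one_add_pow_succ_sub_eq_zero_and_pow_eq_iff {R : Type*} [CommRing R] (x : R) (n : ℕ) :
    (1 + x ^ (n + 1) - (1 + x) ^ (n + 1) = 0 ∧ x ^ n = (1 + x) ^ n) ↔
      (x ^ n = 1 ∧ (1 + x) ^ n = 1) := by
  constructor
  · rintro ⟨hroot, hpow⟩
    have hone : (1 + x) ^ n = 1 := by
      rw [pow_succ, pow_succ, hpow] at hroot
      linear_combination -hroot
    exact ⟨hpow.trans hone, hone⟩
  · rintro ⟨hx, hx1⟩
    refine ⟨?_, hx.trans hx1.symm⟩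
    rw [pow_succ, pow_succ, hx, hx1]
    ring

/-- `r` is a multiple root of `1 + y^m - (1+y)^m` iff `r` and `1+r` are `(m-1)`-st roots
of unity. -/
theorem double_zeros_of_scalar_G (m : ℕ) (hm : 2 ≤ m) (r : ℂ) :
    (1 + r ^ m - (1 + r) ^ m = 0 ∧
      (m : ℂ) * r ^ (m - 1) - (m : ℂ) * (1 + r) ^ (m - 1) = 0) ↔
    (r ^ (m - 1) = 1 ∧ (1 + r) ^ (m - 1) = 1) := by
  obtain ⟨n, rfl⟩ : ∃ n, m = n + 1 := ⟨m - 1, by omega⟩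
  have hderiv : ((n + 1 : ℕ) : ℂ) * r ^ n - ((n + 1 : ℕ) : ℂ) * (1 + r) ^ n = 0 ↔
      r ^ n = (1 + r) ^ n := by
    rw [← mul_sub, mul_eq_zero, sub_eq_zero, or_iff_right (Nat.cast_ne_zero.mpr n.succ_ne_zero)]
  rw [Nat.add_sub_cancel, hderiv]
  exact one_add_pow_succ_sub_eq_zero_and_pow_eq_iff r n
end

section
/- Let c, d ∈ ℂ be nonzero, let m ≥ 2 be an integer, and let r ∈ ℂ with r ≠ -1 be a root of multiplicity at least 2 of the polynomial f(y) = d·(1 + y^m) - c·(1 + y)^m ∈ ℂ[y]. Then r^{m-1} = 1, c·(1+r)^{m-1} = d, and the multiplicity of r as a root of f is exactly 2. -/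
/-!
Write `f = d + (d yᵐ - c (1+y)ᵐ)`. The `k`-th derivative of `d yⁿ - c (1+y)ⁿ` is
`n(n-1)⋯(n-k+1) (d yⁿ⁻ᵏ - c (1+y)ⁿ⁻ᵏ)`, so a root of `f` of multiplicity `> k` is a root of
`d yᵐ⁻ᵏ - c (1+y)ᵐ⁻ᵏ`. The identity `(1+y)(d yⁿ - c (1+y)ⁿ) = (d yⁿ⁺¹ - c (1+y)ⁿ⁺¹) + d yⁿ` then
does all the work: with `n = m - 1` it turns `f(r) = 0` into `d = d rᵐ⁻¹`, and with `n = m - 2` it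
shows that `r` cannot also be a root of `f''`, because `d rᵐ⁻² ≠ 0`.
-/

open Polynomial

namespace Polynomial

noncomputable def powGap {R : Type*} [CommRing R] (c d : R) (n : ℕ) : R[X] :=
  C d * X ^ n - C c * (1 + X) ^ n

section CommRing

variable {R : Type*} [CommRing R] (c d : R)

@[simp]
theorem eval_powGap (n : ℕ) (r : R) : (powGap c d n).eval r = d * r ^ n - c * (1 + r) ^ n := by
  simp [powGap]

theorem derivative_powGap (n : ℕ) :
    derivative (powGap c d n) = C (n : R) * powGap c d (n - 1) := by
  simp only [powGap, derivative_sub, derivative_C_mul, derivative_pow,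
    derivative_add, derivative_one, derivative_X]
  ring

theorem iterate_derivative_powGap (n k : ℕ) :
    derivative^[k] (powGap c d n) = C (n.descFactorial k : R) * powGap c d (n - k) := by
  induction k with
  | zero => simp
  | succ k ih =>
    rw [Function.iterate_succ_apply', ih, derivative_C_mul, derivative_powGap, ← mul_assoc,
      ← C_mul, Nat.descFactorial_succ, Nat.sub_sub, mul_comm (n - k : ℕ), Nat.cast_mul]

variable {c d} in
theorem eval_powGap_succ_of_isRoot {n : ℕ} {r : R} (h : (powGap c d n).IsRoot r) :
    (powGap c d (n + 1)).eval r = -(d * r ^ n) := by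
  rw [IsRoot, eval_powGap] at h
  rw [eval_powGap]
  linear_combination (1 + r) * h

end CommRing

section IsDomain

variable {R : Type*} [CommRing R] [IsDomain R] {c d r : R}

theorem isRoot_powGap_of_lt_rootMultiplicity [CharZero R] {n k : ℕ} (hk : 0 < k)
    (hmult : k < (C d + powGap c d (n + k)).rootMultiplicity r) : (powGap c d n).IsRoot r := by
  have hroot := isRoot_iterate_derivative_of_lt_rootMultiplicity hmult
  rw [iterate_map_add, iterate_derivative_C hk, zero_add, iterate_derivative_powGap,
    Nat.add_sub_cancel, IsRoot, eval_mul, eval_C, mul_eq_zero] at hroot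
  refine hroot.resolve_left (Nat.cast_ne_zero.mpr ?_)
  exact Nat.descFactorial_eq_zero_iff_lt.not.mpr (by omega)

theorem pow_eq_one_of_isRoot_C_add_powGap (hd : d ≠ 0) {n : ℕ}
    (h₀ : (C d + powGap c d (n + 1)).IsRoot r) (h₁ : (powGap c d n).IsRoot r) : r ^ n = 1 := by
  rw [IsRoot, eval_add, eval_C, eval_powGap_succ_of_isRoot h₁] at h₀
  have : d * (1 - r ^ n) = 0 := by linear_combination h₀
  exact (sub_eq_zero.mp ((mul_eq_zero.mp this).resolve_left hd)).symm

theorem not_isRoot_powGap_of_isRoot_succ (hd : d ≠ 0) (hr : r ≠ 0) {n : ℕ}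
    (h : (powGap c d (n + 1)).IsRoot r) : ¬(powGap c d n).IsRoot r := by
  intro h'
  rw [IsRoot, eval_powGap_succ_of_isRoot h', neg_eq_zero] at h
  exact mul_ne_zero hd (pow_ne_zero n hr) h

end IsDomain

end Polynomial

theorem double_zeros_B_general (c d : ℂ) (hd : d ≠ 0) (m : ℕ) (hm : 2 ≤ m)
    (r : ℂ)
    (hmult : 2 ≤ (C d * (1 + X ^ m) - C c * (1 + X) ^ m).rootMultiplicity r) :
    r ^ (m - 1) = 1 ∧ c * (1 + r) ^ (m - 1) = d ∧
      (C d * (1 + X ^ m) - C c * (1 + X) ^ m).rootMultiplicity r = 2 := by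
  obtain ⟨n, rfl⟩ : ∃ n, m = n + 2 := ⟨m - 2, by omega⟩
  have hf : C d * (1 + X ^ (n + 2)) - C c * (1 + X) ^ (n + 2) = C d + powGap c d (n + 2) := by
    rw [powGap]; ring
  rw [hf] at hmult ⊢
  have h₀ : (C d + powGap c d (n + 2)).IsRoot r :=
    (rootMultiplicity_pos'.mp (by omega)).2
  have h₁ : (powGap c d (n + 1)).IsRoot r :=
    isRoot_powGap_of_lt_rootMultiplicity (k := 1) one_pos hmult
  have hr₁ : r ^ (n + 1) = 1 := pow_eq_one_of_isRoot_C_add_powGap hd h₀ h₁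
  have hr₀ : r ≠ 0 := by rintro rfl; simp at hr₁
  refine ⟨hr₁, ?_, le_antisymm ?_ hmult⟩
  · rw [IsRoot, eval_powGap, hr₁, mul_one, sub_eq_zero] at h₁
    exact h₁.symm
  · by_contra! h₂
    exact not_isRoot_powGap_of_isRoot_succ hd hr₀ h₁
      (isRoot_powGap_of_lt_rootMultiplicity two_pos h₂)

/-- Multiple roots `r ≠ -1` of `d(1 + y^m) - c(1+y)^m` satisfy `r^(m-1) = 1` and
`c(1+r)^(m-1) = d`, and are exactly double. -/
theorem double_zeros_B (c d : ℂ) (hc : c ≠ 0) (hd : d ≠ 0) (m : ℕ) (hm : 2 ≤ m)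
    (r : ℂ) (hr : r ≠ -1)
    (hmult : 2 ≤ (C d * (1 + X ^ m) - C c * (1 + X) ^ m).rootMultiplicity r) :
    r ^ (m - 1) = 1 ∧ c * (1 + r) ^ (m - 1) = d ∧
      (C d * (1 + X ^ m) - C c * (1 + X) ^ m).rootMultiplicity r = 2 :=
  double_zeros_B_general c d hd m hm r hmult
end

section
/- Let c, d ∈ ℂ be nonzero, let m ≥ 2 be an integer, and let r ∈ ℂ with r ≠ 0 be a root of multiplicity at least 2 of the polynomial g(y) = c - c·(1 + y)^m + d·y^m ∈ ℂ[y]. Then (1 + r)^{m-1} = 1, c = d·r^{m-1}, and the multiplicity of r as a root of g is exactly 2. -/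
/-!
Write `g = c + P_m` with `P_k(y) = d y^k - c (1+y)^k`. Then `P_{k+1}' = (k+1) P_k`, so in
characteristic zero the multiplicity of a root drops by exactly one along `g, P_{m-1}, P_{m-2}`,
and `P_{k+1}(r) = r P_k(r) - c (1+r)^k`. A double root gives `P_m(r) = -c` and `P_{m-1}(r) = 0`,
whence `c (1+r)^{m-1} = c`; and `P_{m-2}(r) = 0` would force `c (1+r)^{m-2} = 0`, hence
`c = c (1+r)^{m-1} = 0`.
-/

open Polynomial

section CommRing

variable {R : Type*} [CommRing R]

noncomputable def powDiff (c d : R) (k : ℕ) : R[X] := C d * X ^ k - C c * (1 + X) ^ k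

theorem derivative_powDiff (c d : R) (k : ℕ) :
    derivative (powDiff c d (k + 1)) = C ((k : R) + 1) * powDiff c d k := by
  simp only [powDiff, derivative_sub, derivative_mul, derivative_C, derivative_pow,
    derivative_one, derivative_X, Nat.add_sub_cancel, map_add, map_natCast, C_1]
  push_cast
  ring

theorem eval_powDiff_succ (c d r : R) (k : ℕ) :
    (powDiff c d (k + 1)).eval r = r * (powDiff c d k).eval r - c * (1 + r) ^ k := by
  simp only [powDiff, eval_sub, eval_mul, eval_C, eval_pow, eval_X, eval_add, eval_one]
  ring

theorem eq_mul_pow_of_eval_powDiff {c d r : R} {k : ℕ} (hroot : (powDiff c d k).eval r = 0)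
    (hpow : (1 + r) ^ k = 1) : c = d * r ^ k := by
  simp only [powDiff, eval_sub, eval_mul, eval_C, eval_pow, eval_X, eval_add, eval_one,
    hpow] at hroot
  linear_combination -hroot

theorem eval_powDiff_ne_zero {c d r : R} {k : ℕ} (hc : c ≠ 0) (hpow : (1 + r) ^ (k + 1) = 1)
    (h₁ : (powDiff c d (k + 1)).eval r = 0) : (powDiff c d k).eval r ≠ 0 := by
  intro h₀
  rw [eval_powDiff_succ, h₀] at h₁
  exact hc (by linear_combination -(1 + r) * h₁ - c * hpow)

variable [IsDomain R]

theorem one_add_pow_eq_one_of_eval_powDiff {c d r : R} {k : ℕ} (hc : c ≠ 0)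
    (h₂ : (powDiff c d (k + 2)).eval r = -c) (h₁ : (powDiff c d (k + 1)).eval r = 0) :
    (1 + r) ^ (k + 1) = 1 := by
  rw [eval_powDiff_succ, h₁] at h₂
  exact mul_left_cancel₀ hc (by linear_combination -h₂)

theorem rootMultiplicity_C_mul {a : R} (ha : a ≠ 0) (q : R[X]) (t : R) :
    (C a * q).rootMultiplicity t = q.rootMultiplicity t := by
  rcases eq_or_ne q 0 with rfl | hq
  · simp
  · rw [rootMultiplicity_mul (mul_ne_zero (C_ne_zero.2 ha) hq), rootMultiplicity_C, zero_add]

theorem rootMultiplicity_eq_succ_of_derivative_eq_C_mul [CharZero R] {p q : R[X]} {a t : R}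
    (ha : a ≠ 0) (hp : 0 < p.rootMultiplicity t) (hder : derivative p = C a * q) :
    p.rootMultiplicity t = q.rootMultiplicity t + 1 := by
  have hroot := derivative_rootMultiplicity_of_root (rootMultiplicity_pos'.1 hp).2
  rw [hder, rootMultiplicity_C_mul ha] at hroot
  omega

end CommRing

theorem double_zeros_01_general (c d : ℂ) (hc : c ≠ 0) (m : ℕ) (hm : 2 ≤ m)
    (r : ℂ)
    (hmult : 2 ≤ (C c - C c * (1 + X) ^ m + C d * X ^ m).rootMultiplicity r) :
    (1 + r) ^ (m - 1) = 1 ∧ c = d * r ^ (m - 1) ∧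
      (C c - C c * (1 + X) ^ m + C d * X ^ m).rootMultiplicity r = 2 := by
  obtain ⟨k, rfl⟩ : ∃ k, m = k + 2 := ⟨m - 2, by omega⟩
  have hg : C c - C c * (1 + X) ^ (k + 2) + C d * X ^ (k + 2) = C c + powDiff c d (k + 2) := by
    rw [powDiff]; ring
  rw [hg] at hmult ⊢
  have hmult₂ : (C c + powDiff c d (k + 2)).rootMultiplicity r =
      (powDiff c d (k + 1)).rootMultiplicity r + 1 :=
    rootMultiplicity_eq_succ_of_derivative_eq_C_mul (Nat.cast_add_one_ne_zero (k + 1)) (by omega)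
      (by rw [derivative_add, derivative_C, zero_add, derivative_powDiff])
  have hroot : (C c + powDiff c d (k + 2)).IsRoot r := (rootMultiplicity_pos'.1 (by omega)).2
  have h₂ : (powDiff c d (k + 2)).eval r = -c := by
    rw [IsRoot, eval_add, eval_C] at hroot
    linear_combination hroot
  have hmult₁ : 0 < (powDiff c d (k + 1)).rootMultiplicity r := by omega
  have h₁ : (powDiff c d (k + 1)).eval r = 0 := (rootMultiplicity_pos'.1 hmult₁).2
  have hpow := one_add_pow_eq_one_of_eval_powDiff hc h₂ h₁
  refine ⟨hpow, eq_mul_pow_of_eval_powDiff h₁ hpow, ?_⟩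
  rw [hmult₂, rootMultiplicity_eq_succ_of_derivative_eq_C_mul (Nat.cast_add_one_ne_zero k)
    hmult₁ (derivative_powDiff c d k), rootMultiplicity_eq_zero (eval_powDiff_ne_zero hc hpow h₁)]

/-- Multiple roots `r ≠ 0` of `c - c(1+y)^m + d·y^m` satisfy `(1+r)^(m-1) = 1` and
`c = d·r^(m-1)`, and are exactly double. -/
theorem double_zeros_01 (c d : ℂ) (hc : c ≠ 0) (hd : d ≠ 0) (m : ℕ) (hm : 2 ≤ m)
    (r : ℂ) (hr : r ≠ 0)
    (hmult : 2 ≤ (C c - C c * (1 + X) ^ m + C d * X ^ m).rootMultiplicity r) :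
    (1 + r) ^ (m - 1) = 1 ∧ c = d * r ^ (m - 1) ∧
      (C c - C c * (1 + X) ^ m + C d * X ^ m).rootMultiplicity r = 2 :=
  double_zeros_01_general c d hc m hm r hmult
end

section
/- The pairs (x, y) of roots of unity in ℂ satisfying 1 + (x·y - 2·(x - y))·(x·y - 1) + (x - y)² = 0 are exactly the following: x a primitive 3rd root of unity and y a primitive 6th root of unity; or y a primitive 10th root of unity and x = y² or x = y⁻²; or y a primitive 12th root of unity and x = y or x = y⁻¹. -/
open Polynomial Complex Real

theorem IsPrimitiveRoot.isRootOfUnity {z : ℂ} {n : ℕ} (h : IsPrimitiveRoot z n) (hn : 0 < n) :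
    IsRootOfUnity z :=
  ⟨n, hn, h.pow_eq_one⟩

theorem IsRootOfUnity.pow {z : ℂ} (h : IsRootOfUnity z) (k : ℕ) : IsRootOfUnity (z ^ k) := by
  obtain ⟨n, hn, hz⟩ := h
  exact ⟨n, hn, by rw [pow_right_comm, hz, one_pow]⟩

theorem IsRootOfUnity.inv {z : ℂ} (h : IsRootOfUnity z) : IsRootOfUnity z⁻¹ := by
  obtain ⟨n, hn, hz⟩ := h
  exact ⟨n, hn, by rw [inv_pow, hz, inv_one]⟩

namespace Polynomial

theorem cyclotomic_four (R : Type*) [CommRing R] : cyclotomic 4 R = X ^ 2 + 1 := by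
  rw [show 4 = 2 * 2 by rfl, ← cyclotomic_expand_eq_cyclotomic Nat.prime_two dvd_rfl]
  simp

theorem cyclotomic_five (R : Type*) [CommRing R] :
    cyclotomic 5 R = X ^ 4 + X ^ 3 + X ^ 2 + X + 1 := by
  have := Fact.mk Nat.prime_five
  simp only [cyclotomic_prime, Finset.sum_range_succ, Finset.sum_range_zero, pow_zero, pow_one]
  ring

theorem cyclotomic_ten (R : Type*) [CommRing R] :
    cyclotomic 10 R = X ^ 4 - X ^ 3 + X ^ 2 - X + 1 := by
  suffices cyclotomic 10 ℤ = X ^ 4 - X ^ 3 + X ^ 2 - X + 1 by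
    rw [← map_cyclotomic_int, this]
    simp
  apply mul_right_cancel₀ (cyclotomic_ne_zero 5 ℤ)
  rw [show 10 = 5 * 2 by rfl, ← cyclotomic_expand_eq_cyclotomic_mul Nat.prime_two (by norm_num),
    cyclotomic_five]
  simp only [map_add, map_pow, expand_X, map_one]
  ring

theorem cyclotomic_twelve (R : Type*) [CommRing R] : cyclotomic 12 R = X ^ 4 - X ^ 2 + 1 := by
  rw [show 12 = 6 * 2 by rfl, ← cyclotomic_expand_eq_cyclotomic Nat.prime_two (by norm_num)]
  simp only [cyclotomic_six, map_add, map_sub, map_pow, expand_X, map_one]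
  ring

end Polynomial

section PrimitiveRoots

variable {R : Type*} [CommRing R] [IsDomain R] [CharZero R] {z : R}

theorem isPrimitiveRoot_three_iff : IsPrimitiveRoot z 3 ↔ z ^ 2 + z + 1 = 0 := by
  simp [← isRoot_cyclotomic_iff_charZero (by norm_num : 0 < 3), cyclotomic_three]

theorem isPrimitiveRoot_four_iff : IsPrimitiveRoot z 4 ↔ z ^ 2 + 1 = 0 := by
  simp [← isRoot_cyclotomic_iff_charZero (by norm_num : 0 < 4), cyclotomic_four]

theorem isPrimitiveRoot_five_iff : IsPrimitiveRoot z 5 ↔ z ^ 4 + z ^ 3 + z ^ 2 + z + 1 = 0 := by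
  simp [← isRoot_cyclotomic_iff_charZero (by norm_num : 0 < 5), cyclotomic_five]

theorem isPrimitiveRoot_six_iff : IsPrimitiveRoot z 6 ↔ z ^ 2 - z + 1 = 0 := by
  simp [← isRoot_cyclotomic_iff_charZero (by norm_num : 0 < 6)]

theorem isPrimitiveRoot_ten_iff : IsPrimitiveRoot z 10 ↔ z ^ 4 - z ^ 3 + z ^ 2 - z + 1 = 0 := by
  simp [← isRoot_cyclotomic_iff_charZero (by norm_num : 0 < 10), cyclotomic_ten]

theorem isPrimitiveRoot_twelve_iff : IsPrimitiveRoot z 12 ↔ z ^ 4 - z ^ 2 + 1 = 0 := by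
  simp [← isRoot_cyclotomic_iff_charZero (by norm_num : 0 < 12), cyclotomic_twelve]

end PrimitiveRoots

section GaloisConjugates

variable {K : Type*} [Field K] [CharZero K] {ζ : K} {n : ℕ}

theorem IsPrimitiveRoot.aeval_pow_eq_zero_of_coprime (hζ : IsPrimitiveRoot ζ n) (hn : 0 < n)
    {P : ℚ[X]} (hP : aeval ζ P = 0) {k : ℕ} (hk : k.Coprime n) : aeval (ζ ^ k) P = 0 := by
  have hmin : minpoly ℚ (ζ ^ k) = minpoly ℚ ζ := by
    rw [← cyclotomic_eq_minpoly_rat (hζ.pow_of_coprime k hk) hn,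
      cyclotomic_eq_minpoly_rat hζ hn]
  obtain ⟨Q, rfl⟩ := minpoly.dvd ℚ ζ hP
  rw [map_mul, ← hmin, minpoly.aeval, zero_mul]

theorem IsPrimitiveRoot.mvAeval_pow_eq_zero_of_coprime {ι : Type*} (hζ : IsPrimitiveRoot ζ n)
    (hn : 0 < n) {v : ι → K} (hv : ∀ i, v i ^ n = 1) {p : MvPolynomial ι ℚ}
    (hp : MvPolynomial.aeval v p = 0) {k : ℕ} (hk : k.Coprime n) :
    MvPolynomial.aeval (fun i ↦ v i ^ k) p = 0 := by
  have : NeZero n := ⟨hn.ne'⟩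
  choose a _ ha using fun i ↦ hζ.eq_pow_of_pow_eq_one (hv i)
  have hcomp (z : K) : aeval z (MvPolynomial.aeval (fun i ↦ (X : ℚ[X]) ^ a i) p) =
      MvPolynomial.aeval (fun i ↦ z ^ a i) p := by
    simpa using
      DFunLike.congr_fun (MvPolynomial.comp_aeval (fun i ↦ (X : ℚ[X]) ^ a i) (aeval z)) p
  have h := hζ.aeval_pow_eq_zero_of_coprime hn
    (P := MvPolynomial.aeval (fun i ↦ (X : ℚ[X]) ^ a i) p)
    (by rw [hcomp]; simpa only [ha] using hp) hk
  have hconj : (fun i ↦ (ζ ^ k) ^ a i) = fun i ↦ v i ^ k := funext fun i ↦ by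
    rw [pow_right_comm, ha]
  rwa [hcomp, hconj] at h

end GaloisConjugates

theorem Nat.exists_coprime_modEq {m n j : ℕ} (hmn : m ∣ n) (hn : n ≠ 0) (hj : j.Coprime m) :
    ∃ k, k.Coprime n ∧ k ≡ j [MOD m] := by
  have : NeZero n := ⟨hn⟩
  obtain ⟨K, hK⟩ := ZMod.unitsMap_surjective hmn (ZMod.unitOfCoprime j hj)
  refine ⟨(K : ZMod n).val, ZMod.val_coe_unit_coprime K, ?_⟩
  rw [← ZMod.natCast_eq_natCast_iff, ZMod.natCast_val, ← ZMod.coe_unitOfCoprime j hj, ← hK]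
  rfl

theorem exists_coprime_pow_eq_exp {u : ℂ} {n : ℕ} (hn : 0 < n) (hu : u ^ n = 1) :
    ∃ k, k.Coprime n ∧ u ^ k = exp (2 * π * I / orderOf u) := by
  have hm : orderOf u ≠ 0 := (isOfFinOrder_iff_pow_eq_one.mpr ⟨n, hn, hu⟩).orderOf_pos.ne'
  have : NeZero (orderOf u) := ⟨hm⟩
  have hu' : IsPrimitiveRoot u (orderOf u) := IsPrimitiveRoot.orderOf u
  have hexp : IsPrimitiveRoot (exp (2 * π * I / orderOf u)) (orderOf u) :=
    isPrimitiveRoot_exp (orderOf u) hm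
  obtain ⟨j, -, hj⟩ := hu'.eq_pow_of_pow_eq_one hexp.pow_eq_one
  have hjm : j.Coprime (orderOf u) :=
    (hu'.pow_iff_coprime (Nat.pos_of_ne_zero hm) j).mp (by rwa [hj])
  obtain ⟨k, hkn, hkj⟩ := Nat.exists_coprime_modEq (orderOf_dvd_of_pow_eq_one hu) hn.ne' hjm
  exact ⟨k, hkn, (pow_eq_pow_of_modEq hkj (pow_orderOf_eq_one u)).trans hj⟩

theorem orderOf_mem_Icc_of_forall_re_pow_le_half {u : ℂ} {n : ℕ} (hn : 0 < n) (hu : u ^ n = 1)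
    (h : ∀ k, k.Coprime n → (u ^ k).re ≤ 1 / 2) : orderOf u ∈ Set.Icc 2 6 := by
  have hm : 0 < orderOf u := (isOfFinOrder_iff_pow_eq_one.mpr ⟨n, hn, hu⟩).orderOf_pos
  have hu1 : orderOf u ≠ 1 := fun h1 ↦ by
    have := h 1 (Nat.coprime_one_left n)
    rw [orderOf_eq_one_iff.mp h1] at this
    norm_num at this
  refine ⟨by omega, ?_⟩
  obtain ⟨k, hk, hku⟩ := exists_coprime_pow_eq_exp hn hu
  have hcos : Real.cos (2 * π / orderOf u) ≤ 1 / 2 := by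
    have := h k hk
    rwa [hku, show 2 * π * I / orderOf u = ((2 * π / orderOf u : ℝ) : ℂ) * I by
      push_cast; ring, exp_ofReal_mul_I_re] at this
  by_contra! h7
  have h7' : (7 : ℝ) ≤ orderOf u := by exact_mod_cast h7
  have hlt : 2 * π / orderOf u < π / 3 := by
    rw [div_lt_div_iff₀ (by positivity) (by norm_num)]
    nlinarith [pi_pos]
  have := cos_lt_cos_of_nonneg_of_le_pi (by positivity) (by linarith [pi_pos]) hlt
  rw [cos_pi_div_three] at this
  linarith

theorem two_mul_re_add_two_mul_re_add_one_eq_zero {u w : ℂ} (hu : ‖u‖ = 1) (hw : ‖w‖ = 1)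
    (h : u ^ 2 * w + u * w ^ 2 + u * w + u + w = 0) : 2 * u.re + 2 * w.re + 1 = 0 := by
  have hu0 : u ≠ 0 := norm_ne_zero_iff.mp (by rw [hu]; exact one_ne_zero)
  have hw0 : w ≠ 0 := norm_ne_zero_iff.mp (by rw [hw]; exact one_ne_zero)
  have hinv : u + u⁻¹ + w + w⁻¹ + 1 = 0 := by
    field_simp
    linear_combination h
  rw [inv_eq_conj hu, inv_eq_conj hw] at hinv
  simpa [two_mul, add_assoc, add_left_comm] using congrArg re hinv

theorem orderOf_mem_Icc_of_relation {u w : ℂ} {n : ℕ} (hn : 0 < n) (hu : u ^ n = 1)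
    (hw : w ^ n = 1) (h : u ^ 2 * w + u * w ^ 2 + u * w + u + w = 0) :
    orderOf u ∈ Set.Icc 2 6 := by
  refine orderOf_mem_Icc_of_forall_re_pow_le_half hn hu fun k hk ↦ ?_
  let p : MvPolynomial (Fin 2) ℚ := .X 0 ^ 2 * .X 1 + .X 0 * .X 1 ^ 2 + .X 0 * .X 1 + .X 0 + .X 1
  have hconj := (isPrimitiveRoot_exp n hn.ne').mvAeval_pow_eq_zero_of_coprime hn
    (v := ![u, w]) (p := p) (by simp [Fin.forall_fin_two, hu, hw]) (by simpa [p] using h) hk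
  have hnorm {z : ℂ} (hz : z ^ n = 1) : ‖z ^ k‖ = 1 := by
    rw [norm_pow, norm_eq_one_of_pow_eq_one hz hn.ne', one_pow]
  have hre := two_mul_re_add_two_mul_re_add_one_eq_zero (hnorm hu) (hnorm hw)
    (by simpa [p] using hconj)
  have hwk : -1 ≤ (w ^ k).re := by
    linarith [neg_abs_le (w ^ k).re, abs_re_le_norm (w ^ k), hnorm hw]
  linarith

theorem exists_parametrization_of_curve {x y : ℂ} {N : ℕ} (hN : 0 < N) (hx : x ^ N = 1)
    (hy : y ^ N = 1) (h : (x + 1) ^ 2 * (y - 1) ^ 2 + x * y = 0) :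
    ∃ u w : ℂ, u ^ (4 * N) = 1 ∧ w ^ (4 * N) = 1 ∧ x = u * w ∧ u * y = -w ∧
      u ^ 2 * w + u * w ^ 2 + u * w + u + w = 0 := by
  have hx0 : x ≠ 0 := by rintro rfl; simp [hN.ne'] at hx
  have hy0 : y ≠ 0 := by rintro rfl; simp [hN.ne'] at hy
  set w := (x + 1) * (y - 1) with hw_def
  have hw2 : w ^ 2 = -(x * y) := by linear_combination h
  have hw0 : w ≠ 0 := fun hw ↦ mul_ne_zero hx0 hy0 (by linear_combination hw2 - w * hw)
  have hw : w ^ (4 * N) = 1 := by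
    calc w ^ (4 * N) = ((w ^ 2) ^ 2) ^ N := by rw [← pow_mul, ← pow_mul, ← mul_assoc]; rfl
      _ = (x ^ N * y ^ N) ^ 2 := by rw [hw2]; ring
      _ = 1 := by rw [hx, hy]; norm_num
  refine ⟨x / w, w, ?_, hw, (div_mul_cancel₀ x hw0).symm, ?_, ?_⟩
  · rw [div_pow, hw, div_one, mul_comm, pow_mul, hx, one_pow]
  · field_simp
    linear_combination hw2
  · field_simp
    linear_combination (1 + x) * hw2 + x * hw_def

section OrderCases

variable {u w x y : ℂ}

theorem points_of_isPrimitiveRoot_two (hu : IsPrimitiveRoot u 2)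
    (h : u ^ 2 * w + u * w ^ 2 + u * w + u + w = 0) (hx : x = u * w) (hy : u * y = -w) :
    IsPrimitiveRoot x 3 ∧ IsPrimitiveRoot y 6 := by
  obtain rfl := hu.eq_neg_one_of_two_right
  have hyw : y = w := by linear_combination -hy
  subst hx hyw
  constructor
  · rw [isPrimitiveRoot_three_iff]; linear_combination -h
  · rw [isPrimitiveRoot_six_iff]; linear_combination -h

theorem points_of_isPrimitiveRoot_six (hu : IsPrimitiveRoot u 6)
    (h : u ^ 2 * w + u * w ^ 2 + u * w + u + w = 0) (hx : x = u * w) (hy : u * y = -w) :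
    IsPrimitiveRoot x 3 ∧ IsPrimitiveRoot y 6 := by
  have hu6 := isPrimitiveRoot_six_iff.mp hu
  have hu0 : u ≠ 0 := hu.ne_zero (by norm_num)
  have hw : w = -1 := by
    have : u * (w + 1) ^ 2 = 0 := by linear_combination h - w * hu6
    linear_combination pow_eq_zero_iff two_ne_zero |>.mp ((mul_eq_zero.mp this).resolve_left hu0)
  subst hw hx
  refine ⟨isPrimitiveRoot_three_iff.mpr (by linear_combination hu6), ?_⟩
  rw [eq_inv_of_mul_eq_one_right (by linear_combination hy : u * y = 1)]
  exact hu.inv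

theorem points_of_isPrimitiveRoot_three (hu : IsPrimitiveRoot u 3)
    (h : u ^ 2 * w + u * w ^ 2 + u * w + u + w = 0) (hx : x = u * w) (hy : u * y = -w) :
    IsPrimitiveRoot y 12 ∧ (x = y ∨ x = y⁻¹) := by
  have hu3 := isPrimitiveRoot_three_iff.mp hu
  have hu0 : u ≠ 0 := hu.ne_zero (by norm_num)
  have hw : w ^ 2 = -1 := by
    have : u * (w ^ 2 + 1) = 0 := by linear_combination h - w * hu3
    linear_combination (mul_eq_zero.mp this).resolve_left hu0
  have hyuw : y = -w * u ^ 2 := by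
    apply mul_left_cancel₀ hu0
    linear_combination hy + w * (u - 1) * hu3
  refine ⟨isPrimitiveRoot_twelve_iff.mpr ?_, Or.inr (eq_inv_of_mul_eq_one_left ?_)⟩
  · rw [hyuw]
    linear_combination (u ^ 8 * w ^ 2 - u ^ 8 - u ^ 4) * hw + (u ^ 6 - u ^ 5 + u ^ 3 - u + 1) * hu3
  · linear_combination y * hx + w * hy - hw

theorem points_of_isPrimitiveRoot_four (hu : IsPrimitiveRoot u 4)
    (h : u ^ 2 * w + u * w ^ 2 + u * w + u + w = 0) (hx : x = u * w) (hy : u * y = -w) :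
    IsPrimitiveRoot y 12 ∧ (x = y ∨ x = y⁻¹) := by
  have hu4 := isPrimitiveRoot_four_iff.mp hu
  have hu0 : u ≠ 0 := hu.ne_zero (by norm_num)
  have hw : w ^ 2 + w + 1 = 0 := by
    have : u * (w ^ 2 + w + 1) = 0 := by linear_combination h - w * hu4
    exact (mul_eq_zero.mp this).resolve_left hu0
  have hyuw : y = w * u := by
    apply mul_left_cancel₀ hu0
    linear_combination hy - w * hu4
  refine ⟨isPrimitiveRoot_twelve_iff.mpr ?_, Or.inl ?_⟩
  · rw [hyuw]
    linear_combination (u ^ 2 * w ^ 4 - w ^ 4 - w ^ 2) * hu4 + (w ^ 2 - w + 1) * hw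
  · rw [hx, hyuw, mul_comm]

theorem points_of_isPrimitiveRoot_five (hu : IsPrimitiveRoot u 5)
    (h : u ^ 2 * w + u * w ^ 2 + u * w + u + w = 0) (hx : x = u * w) (hy : u * y = -w) :
    IsPrimitiveRoot y 10 ∧ (x = y ^ 2 ∨ x = (y ^ 2)⁻¹) := by
  have hu5 := isPrimitiveRoot_five_iff.mp hu
  have hu0 : u ≠ 0 := hu.ne_zero (by norm_num)
  have : u * ((w - u ^ 2) * (w - u ^ 3)) = 0 := by linear_combination h + (u ^ 2 - u - w) * hu5
  rcases mul_eq_zero.mp ((mul_eq_zero.mp this).resolve_left hu0) with hw | hw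
  · have hyu : y = -u := mul_left_cancel₀ hu0 (by linear_combination hy - hw)
    subst hyu hx
    refine ⟨isPrimitiveRoot_ten_iff.mpr (by linear_combination hu5),
      Or.inr (eq_inv_of_mul_eq_one_left ?_)⟩
    linear_combination (u ^ 2 * u) * hw + (u - 1) * hu5
  · have hyu : y = -u ^ 2 := mul_left_cancel₀ hu0 (by linear_combination hy - hw)
    subst hyu hx
    refine ⟨isPrimitiveRoot_ten_iff.mpr ?_, Or.inl ?_⟩
    · linear_combination (u ^ 4 - u ^ 3 + u ^ 2 - u + 1) * hu5
    · linear_combination u * hw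

end OrderCases

section Converse

variable {x y : ℂ}

theorem curve_of_isPrimitiveRoot_three_six (hx : IsPrimitiveRoot x 3) (hy : IsPrimitiveRoot y 6) :
    1 + (x * y - 2 * (x - y)) * (x * y - 1) + (x - y) ^ 2 = 0 := by
  linear_combination (y ^ 2 - 2 * y + 1) * isPrimitiveRoot_three_iff.mp hx +
    x * isPrimitiveRoot_six_iff.mp hy

theorem curve_of_isPrimitiveRoot_ten (hy : IsPrimitiveRoot y 10)
    (hx : x = y ^ 2 ∨ x = (y ^ 2)⁻¹) :
    1 + (x * y - 2 * (x - y)) * (x * y - 1) + (x - y) ^ 2 = 0 := by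
  have hy10 := isPrimitiveRoot_ten_iff.mp hy
  have hy0 : y ≠ 0 := hy.ne_zero (by norm_num)
  rcases hx with rfl | rfl
  · linear_combination (y ^ 2 - y + 1) * hy10
  · field_simp
    linear_combination (y ^ 2 - y + 1) * hy10

theorem curve_of_isPrimitiveRoot_twelve (hy : IsPrimitiveRoot y 12) (hx : x = y ∨ x = y⁻¹) :
    1 + (x * y - 2 * (x - y)) * (x * y - 1) + (x - y) ^ 2 = 0 := by
  have hy12 := isPrimitiveRoot_twelve_iff.mp hy
  have hy0 : y ≠ 0 := hy.ne_zero (by norm_num)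
  rcases hx with rfl | rfl
  · linear_combination hy12
  · field_simp
    linear_combination hy12

end Converse

/-- Cyclotomic points on the curve `1 + (xy - 2(x-y))(xy - 1) + (x-y)² = 0`. -/
theorem cyclotomic_points_curve_one (x y : ℂ) :
    (IsRootOfUnity x ∧ IsRootOfUnity y ∧
      1 + (x * y - 2 * (x - y)) * (x * y - 1) + (x - y) ^ 2 = 0) ↔
    ((IsPrimitiveRoot x 3 ∧ IsPrimitiveRoot y 6) ∨
     (IsPrimitiveRoot y 10 ∧ (x = y ^ 2 ∨ x = (y ^ 2)⁻¹)) ∨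
     (IsPrimitiveRoot y 12 ∧ (x = y ∨ x = y⁻¹))) := by
  constructor
  · rintro ⟨⟨a, ha, hxa⟩, ⟨b, hb, hyb⟩, h⟩
    obtain ⟨u, w, hu, hw, hx, hy, hrel⟩ := exists_parametrization_of_curve (Nat.mul_pos ha hb)
      (by rw [pow_mul, hxa, one_pow]) (by rw [mul_comm, pow_mul, hyb, one_pow])
      (by linear_combination h)
    have hprim := IsPrimitiveRoot.orderOf u
    obtain ⟨h2, h6⟩ := orderOf_mem_Icc_of_relation (by positivity) hu hw hrel
    interval_cases orderOf u
    · exact .inl (points_of_isPrimitiveRoot_two hprim hrel hx hy)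
    · exact .inr (.inr (points_of_isPrimitiveRoot_three hprim hrel hx hy))
    · exact .inr (.inr (points_of_isPrimitiveRoot_four hprim hrel hx hy))
    · exact .inr (.inl (points_of_isPrimitiveRoot_five hprim hrel hx hy))
    · exact .inl (points_of_isPrimitiveRoot_six hprim hrel hx hy)
  · rintro (⟨hx, hy⟩ | ⟨hy, hx⟩ | ⟨hy, hx⟩)
    · exact ⟨hx.isRootOfUnity (by norm_num), hy.isRootOfUnity (by norm_num),
        curve_of_isPrimitiveRoot_three_six hx hy⟩
    · have hy' := hy.isRootOfUnity (by norm_num)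
      refine ⟨?_, hy', curve_of_isPrimitiveRoot_ten hy hx⟩
      rcases hx with rfl | rfl
      exacts [hy'.pow 2, (hy'.pow 2).inv]
    · have hy' := hy.isRootOfUnity (by norm_num)
      refine ⟨?_, hy', curve_of_isPrimitiveRoot_twelve hy hx⟩
      rcases hx with rfl | rfl
      exacts [hy', hy'.inv]
end
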